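/- Let r ≥ 1 and let ρ ∈ ℝ^r satisfy 0 < ρᵀρ < 1. Define the (r+1)×(r+1) symmetric block matrix L with blocks L₁₁ = ½ log(1 − ρᵀρ) (scalar), L₁₂ = (artanh(√(ρᵀρ))/√(ρᵀρ)) ρᵀ, L₂₁ = L₁₂ᵀ, and L₂₂ = (log(1 − ρᵀρ)/(2 ρᵀρ)) ρρᵀ. Then the matrix exponential of L equals C* = [[1, ρᵀ],[ρ, I_r]]; that is, L is the matrix logarithm of the correlation matrix C*. -/

import Mathlib

open Matrix

/-- Inverse hyperbolic tangent (Fisher transformation). -/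
noncomputable def artanh (x : ℝ) : ℝ := Real.log ((1 + x) / (1 - x)) / 2

/-!
Write `t = √(ρᵀρ)` and `u = ρ / t`, a unit vector. The rank-one matrices
`P± = ½ (1, ±u)(1, ±u)ᵀ` are idempotent and `P₊ P₋ = P₋ P₊ = 0`, because `(1, u)` and `(1, -u)`
both have squared length `2` and are orthogonal. With `a = ½ log (1 - t²)` and `θ = artanh t`
one has `L = (a + θ) P₊ + (a - θ) P₋`, so `exp L = 1 + (e^(a+θ) - 1) P₊ + (e^(a-θ) - 1) P₋`.
Since `e^(a±θ) = 1 ± t`, this is `1 + t (P₊ - P₋)`, whose off-diagonal blocks are `tu = ρ`.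
-/

open NormedSpace Nat in
theorem exp_smul_of_isIdempotentElem {𝔸 : Type*} [Ring 𝔸] [Algebra ℝ 𝔸] [TopologicalSpace 𝔸]
    [IsTopologicalRing 𝔸] [ContinuousSMul ℝ 𝔸] [T2Space 𝔸] {p : 𝔸} (hp : IsIdempotentElem p)
    (a : ℝ) : exp (a • p) = 1 + (Real.exp a - 1) • p := by
  have hterm : (fun n : ℕ => (n ! : ℝ)⁻¹ • (a • p) ^ n) =
      fun n => ((n ! : ℝ)⁻¹ * a ^ n) • p + if n = 0 then 1 - p else 0 := by
    funext n
    rcases n with _ | n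
    · simp
    · rw [smul_pow, hp.pow_succ_eq, smul_smul]; simp
  have hsum : HasSum (fun n : ℕ => ((n ! : ℝ)⁻¹ * a ^ n) • p + if n = 0 then 1 - p else 0)
      (Real.exp a • p + (1 - p)) := by
    refine HasSum.add ?_ (hasSum_ite_eq 0 (1 - p))
    rw [Real.exp_eq_exp_ℝ]
    exact (exp_series_hasSum_exp' (𝕂 := ℝ) a).smul_const p
  rw [exp_eq_tsum ℝ]
  dsimp only
  rw [hterm, hsum.tsum_eq]
  module

namespace Matrix

variable {n : Type*}

theorem exp_smul_add_smul_of_orthogonal_idempotents [Fintype n] [DecidableEq n]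
    {p q : Matrix n n ℝ} (hp : IsIdempotentElem p) (hq : IsIdempotentElem q) (hpq : p * q = 0)
    (hqp : q * p = 0) (a b : ℝ) :
    NormedSpace.exp (a • p + b • q) = 1 + (Real.exp a - 1) • p + (Real.exp b - 1) • q := by
  have hcomm : Commute (a • p) (b • q) := by
    simp only [Commute, SemiconjBy, smul_mul_smul, hpq, hqp, smul_zero]
  rw [exp_add_of_commute _ _ hcomm, exp_smul_of_isIdempotentElem hp,
    exp_smul_of_isIdempotentElem hq]
  simp only [mul_add, add_mul, one_mul, mul_one, smul_mul_smul, hpq, smul_zero]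
  abel

theorem isIdempotentElem_inv_smul_vecMulVec_self {𝕜 : Type*} [Field 𝕜] [Fintype n] {w : n → 𝕜}
    {c : 𝕜} (hc : c ≠ 0) (hw : w ⬝ᵥ w = c) : IsIdempotentElem (c⁻¹ • vecMulVec w w) := by
  rw [IsIdempotentElem, smul_mul_smul, vecMulVec_mul_vecMulVec, hw, vecMulVec_smul, smul_smul,
    mul_assoc, inv_mul_cancel₀ hc, mul_one]

theorem vecMulVec_self_mul_vecMulVec_self_of_dotProduct_eq_zero {𝕜 : Type*} [CommSemiring 𝕜]
    [Fintype n] {v w : n → 𝕜} (h : v ⬝ᵥ w = 0) : vecMulVec v v * vecMulVec w w = 0 := by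
  rw [vecMulVec_mul_vecMulVec, h, zero_smul, vecMulVec_zero]

/-- For a unit vector `u`, the orthogonal projection onto the line through `(1, u)`. -/
noncomputable def lineProj (u : n → ℝ) : Matrix (Fin 1 ⊕ n) (Fin 1 ⊕ n) ℝ :=
  (2 : ℝ)⁻¹ • vecMulVec (Sum.elim 1 u) (Sum.elim 1 u)

theorem isIdempotentElem_lineProj [Fintype n] {u : n → ℝ} (hu : u ⬝ᵥ u = 1) :
    IsIdempotentElem (lineProj u) :=
  isIdempotentElem_inv_smul_vecMulVec_self two_ne_zero (by
    norm_num [sumElim_dotProduct_sumElim, hu])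

theorem lineProj_mul_lineProj_neg [Fintype n] {u : n → ℝ} (hu : u ⬝ᵥ u = 1) :
    lineProj u * lineProj (-u) = 0 := by
  have horth : Sum.elim (1 : Fin 1 → ℝ) u ⬝ᵥ Sum.elim 1 (-u) = 0 := by simp [sumElim_dotProduct_sumElim, hu]
  rw [lineProj, lineProj, smul_mul_smul,
    vecMulVec_self_mul_vecMulVec_self_of_dotProduct_eq_zero horth, smul_zero]

theorem smul_lineProj_add_smul_lineProj_neg (u : n → ℝ) (α β : ℝ) :
    α • lineProj u + β • lineProj (-u) =
      fromBlocks (((α + β) / 2) • 1) (((α - β) / 2) • of fun _ j => u j)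
        (((α - β) / 2) • of fun i _ => u i) (((α + β) / 2) • vecMulVec u u) := by
  ext (i | i) (j | j) <;>
    simp only [lineProj, Fin.fin_one_eq_zero, Fin.isValue, add_apply, smul_apply, Pi.smul_apply,
      vecMulVec_apply, Sum.elim_inl, Sum.elim_inr, Pi.one_apply, Pi.neg_apply, mul_one, one_mul,
      mul_neg, neg_mul, neg_neg, smul_eq_mul, smul_of, of_apply, one_apply_eq, fromBlocks_apply₁₁,
      fromBlocks_apply₁₂, fromBlocks_apply₂₁, fromBlocks_apply₂₂] <;>
    ring

theorem exp_smul_lineProj_add_smul_lineProj_neg [Fintype n] [DecidableEq n] {u : n → ℝ}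
    (hu : u ⬝ᵥ u = 1) (α β : ℝ) :
    NormedSpace.exp (α • lineProj u + β • lineProj (-u)) =
      1 + (Real.exp α - 1) • lineProj u + (Real.exp β - 1) • lineProj (-u) := by
  have hu' : -u ⬝ᵥ -u = 1 := by rw [neg_dotProduct_neg, hu]
  refine exp_smul_add_smul_of_orthogonal_idempotents (isIdempotentElem_lineProj hu)
    (isIdempotentElem_lineProj hu') (lineProj_mul_lineProj_neg hu) ?_ α β
  simpa using lineProj_mul_lineProj_neg hu'

end Matrix

theorem half_log_one_sub_sq_add_artanh {t : ℝ} (h₀ : -1 < t) (h₁ : t < 1) :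
    Real.log (1 - t ^ 2) / 2 + artanh t = Real.log (1 + t) := by
  have h1s : 1 - t ^ 2 = (1 - t) * (1 + t) := by ring
  rw [artanh, h1s, Real.log_mul (by linarith) (by linarith),
    Real.log_div (by linarith) (by linarith)]
  ring

theorem half_log_one_sub_sq_sub_artanh {t : ℝ} (h₀ : -1 < t) (h₁ : t < 1) :
    Real.log (1 - t ^ 2) / 2 - artanh t = Real.log (1 - t) := by
  have h1s : 1 - t ^ 2 = (1 - t) * (1 + t) := by ring
  rw [artanh, h1s, Real.log_mul (by linarith) (by linarith),
    Real.log_div (by linarith) (by linarith)]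
  ring

theorem matrixExp_log_corr_general (r : ℕ) (ρ : Fin r → ℝ)
    (h0 : 0 < ρ ⬝ᵥ ρ) (h1 : ρ ⬝ᵥ ρ < 1)
    (L : Matrix (Fin 1 ⊕ Fin r) (Fin 1 ⊕ Fin r) ℝ)
    (hL : L = Matrix.fromBlocks
        ((Real.log (1 - ρ ⬝ᵥ ρ) / 2) • (1 : Matrix (Fin 1) (Fin 1) ℝ))
        ((artanh (Real.sqrt (ρ ⬝ᵥ ρ)) / Real.sqrt (ρ ⬝ᵥ ρ)) • Matrix.of fun _ j => ρ j)
        ((artanh (Real.sqrt (ρ ⬝ᵥ ρ)) / Real.sqrt (ρ ⬝ᵥ ρ)) • Matrix.of fun i _ => ρ i)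
        ((Real.log (1 - ρ ⬝ᵥ ρ) / (2 * (ρ ⬝ᵥ ρ))) • Matrix.vecMulVec ρ ρ)) :
    NormedSpace.exp L =
      Matrix.fromBlocks 1 (Matrix.of fun _ j => ρ j) (Matrix.of fun i _ => ρ i) 1 := by
  set t := √(ρ ⬝ᵥ ρ)
  have ht₀ : 0 < t := Real.sqrt_pos.2 h0
  have ht₁ : t < 1 := (Real.sqrt_lt' one_pos).2 (by simpa using h1)
  have hts : t ^ 2 = ρ ⬝ᵥ ρ := Real.sq_sqrt h0.le
  set u := t⁻¹ • ρ
  have hu : u ⬝ᵥ u = 1 := by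
    rw [smul_dotProduct, dotProduct_smul, ← hts, smul_smul, smul_eq_mul]; field_simp
  set a := Real.log (1 - t ^ 2) / 2
  have hL' : L = (a + artanh t) • lineProj u + (a - artanh t) • lineProj (-u) := by
    rw [hL, smul_lineProj_add_smul_lineProj_neg]
    ext (i | i) (j | j) <;>
      simp only [← hts, a, u, Matrix.smul_apply, Pi.smul_apply, smul_eq_mul, smul_of, of_apply,
        vecMulVec_apply, vecMulVec_smul, smul_vecMulVec, add_add_sub_cancel, add_halves,
        add_sub_sub_cancel, add_self_div_two, fromBlocks_apply₁₁, fromBlocks_apply₁₂,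
        fromBlocks_apply₂₁, fromBlocks_apply₂₂] <;>
      field_simp
  have hC : fromBlocks 1 (of fun _ j => ρ j) (of fun i _ => ρ i) 1 =
      1 + t • lineProj u + (-t) • lineProj (-u) := by
    rw [add_assoc, smul_lineProj_add_smul_lineProj_neg, ← fromBlocks_one, fromBlocks_add]
    ext (i | i) (j | j) <;>
      simp only [u, add_neg_cancel, sub_neg_eq_add, add_self_div_two, zero_div, zero_smul,
        add_zero, zero_add, Pi.smul_apply, smul_eq_mul, smul_of, of_apply, vecMulVec_smul,
        smul_vecMulVec, fromBlocks_apply₁₁, fromBlocks_apply₁₂, fromBlocks_apply₂₁,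
        fromBlocks_apply₂₂] <;>
      field_simp
  rw [hL', exp_smul_lineProj_add_smul_lineProj_neg hu,
    half_log_one_sub_sq_add_artanh (by linarith) ht₁, Real.exp_log (by linarith),
    half_log_one_sub_sq_sub_artanh (by linarith) ht₁, Real.exp_log (by linarith), hC,
    add_sub_cancel_left, sub_sub_cancel_left]

/-- The block matrix `L` built from `ρ` (with `0 < ρᵀρ < 1`) is the
matrix logarithm of the correlation matrix `C* = [[1, ρᵀ],[ρ, I_r]]`, i.e.
`exp(L) = C*`. -/
theorem matrixExp_log_corr (r : ℕ) (hr : 1 ≤ r) (ρ : Fin r → ℝ)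
    (h0 : 0 < ρ ⬝ᵥ ρ) (h1 : ρ ⬝ᵥ ρ < 1)
    (L : Matrix (Fin 1 ⊕ Fin r) (Fin 1 ⊕ Fin r) ℝ)
    (hL : L = Matrix.fromBlocks
        ((Real.log (1 - ρ ⬝ᵥ ρ) / 2) • (1 : Matrix (Fin 1) (Fin 1) ℝ))
        ((artanh (Real.sqrt (ρ ⬝ᵥ ρ)) / Real.sqrt (ρ ⬝ᵥ ρ)) • Matrix.of fun _ j => ρ j)
        ((artanh (Real.sqrt (ρ ⬝ᵥ ρ)) / Real.sqrt (ρ ⬝ᵥ ρ)) • Matrix.of fun i _ => ρ i)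
        ((Real.log (1 - ρ ⬝ᵥ ρ) / (2 * (ρ ⬝ᵥ ρ))) • Matrix.vecMulVec ρ ρ)) :
    NormedSpace.exp L =
      Matrix.fromBlocks 1 (Matrix.of fun _ j => ρ j) (Matrix.of fun i _ => ρ i) 1 :=
  matrixExp_log_corr_general r ρ h0 h1 L hL
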